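/- arXiv:2503.07445 — 7 statements merged into one kernel-verified Lean document; each statement's English description precedes it below -/
import Mathlib

section
/- For every integer k ≥ 3 there exists a subset L of Z_{2k+1} of size k such that L ∪ (−L) = Z_{2k+1} \ {0}, the elements of L sum to 0 in Z_{2k+1}, and L admits an ordering (ℓ_0,…,ℓ_{k−1}) whose partial sums c_i = ℓ_0 + ⋯ + ℓ_i (for 0 ≤ i ≤ k−1) are pairwise distinct in Z_{2k+1}. -/
set_option maxHeartbeats 1600000

def vN (k j : ℕ) : ℕ :=
  if k % 4 = 0 then
    (if j % 2 = 0 then (if j = k then 0 else j / 2)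
     else (if j / 2 < k / 4 then k - j / 2 else k - 1 - j / 2))
  else if k % 4 = 3 then
    (if j = k then 0 else if j % 2 = 0 then j / 2
     else (if j / 2 ≤ k / 4 then k - j / 2 else k - 1 - j / 2))
  else if k % 4 = 1 then
    (if j = k then 2 * k + 1 else if j % 2 = 0 then
       (if j / 2 + 1 ≤ 2 * (k / 4) then j / 2 else 2 * (k / 4) + 1)
     else (if j / 2 < k / 4 then 2 * k - j / 2 else 2 * k - 1 - j / 2))
  else
    (if j = k then 2 * k + 1 else if j % 2 = 0 then
       (if j / 2 ≤ (k / 2 - 1) / 2 then j / 2 else j / 2 + 1)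
     else (if j / 2 ≤ k / 2 - 2 then 2 * k - j / 2 else 2 * k - k / 2))

def eN (k i : ℕ) : ℕ :=
  if k % 4 = 0 then
    (if i = k - 1 then k / 2 else if i % 2 = 0 then
       (if i / 2 < k / 4 then k - 2 * (i / 2) else k - 1 - 2 * (i / 2))
     else (if i / 2 < k / 4 then k - 2 * (i / 2) - 1 else k - 2 * (i / 2) - 2))
  else if k % 4 = 3 then
    (if i = k - 1 then k / 2 else if i % 2 = 0 then
       (if i / 2 ≤ k / 4 then k - 2 * (i / 2) else k - 1 - 2 * (i / 2))
     else (if i / 2 ≤ k / 4 then k - 2 * (i / 2) - 1 else k - 2 * (i / 2) - 2))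
  else if k % 4 = 1 then
    (if i = k - 1 then 2 * (k / 4) + 1 else if i % 2 = 0 then
       (if i / 2 < k / 4 then 2 * (i / 2) + 1 else 2 * (i / 2) + 2)
     else (if i / 2 < k / 4 then 2 * (i / 2) + 2
           else if i / 2 + 2 ≤ 2 * (k / 4) then 2 * (i / 2) + 3 else k))
  else
    (if i = k - 1 then k / 2 + 1 else if i % 2 = 0 then
       (if i / 2 ≤ (k / 2 - 1) / 2 then 2 * (i / 2) + 1
        else if i / 2 ≤ k / 2 - 2 then 2 * (i / 2) + 2 else k)
     else (if i / 2 < (k / 2 - 1) / 2 then 2 * (i / 2) + 2 else 2 * (i / 2) + 3))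

theorem vN_zero (k : ℕ) (hk : 3 ≤ k) : vN k 0 = 0 := by
  rcases (by omega : k%4 = 0 ∨ k%4 = 1 ∨ k%4 = 2 ∨ k%4 = 3) with h4|h4|h4|h4 <;>
    simp only [vN, h4] <;> norm_num <;> first | omega | (split_ifs <;> omega)

theorem vN_last (k : ℕ) (hk : 3 ≤ k) : vN k k = 0 ∨ vN k k = 2 * k + 1 := by
  rcases (by omega : k%4 = 0 ∨ k%4 = 1 ∨ k%4 = 2 ∨ k%4 = 3) with h4|h4|h4|h4 <;>
    simp only [vN, h4] <;> norm_num <;> first | omega | (split_ifs <;> omega)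

theorem eN_bounds (k i : ℕ) (hk : 3 ≤ k) (hi : i < k) : 1 ≤ eN k i ∧ eN k i ≤ k := by
  rcases (by omega : k%4 = 0 ∨ k%4 = 1 ∨ k%4 = 2 ∨ k%4 = 3) with h4|h4|h4|h4 <;>
    simp only [eN, h4] <;> norm_num <;> first | omega | (split_ifs <;> omega)

theorem eN_inj (k i j : ℕ) (hk : 3 ≤ k) (hij : i < j) (hj : j < k) : eN k i ≠ eN k j := by
  rcases (by omega : k%4 = 0 ∨ k%4 = 1 ∨ k%4 = 2 ∨ k%4 = 3) with h4|h4|h4|h4 <;>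
    simp only [eN, h4] <;> norm_num <;> first | omega | (split_ifs <;> omega)

theorem vN_window (k i j : ℕ) (hk : 3 ≤ k) (hi : 1 ≤ i) (hij : i < j) (hj : j ≤ k) :
    vN k i ≠ vN k j ∧ vN k j < vN k i + (2 * k + 1) ∧ vN k i < vN k j + (2 * k + 1) := by
  rcases (by omega : k%4 = 0 ∨ k%4 = 1 ∨ k%4 = 2 ∨ k%4 = 3) with h4|h4|h4|h4 <;>
    simp only [vN, h4] <;> norm_num <;> first | omega | (split_ifs <;> omega)

theorem vN_step (k i : ℕ) (hk : 3 ≤ k) (hi : i < k) :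
    (vN k (i+1) : ℤ) - vN k i = eN k i ∨
    (vN k (i+1) : ℤ) - vN k i = -eN k i ∨
    (vN k (i+1) : ℤ) - vN k i = eN k i - (2*k+1) ∨
    (vN k (i+1) : ℤ) - vN k i = -eN k i + (2*k+1) ∨
    (vN k (i+1) : ℤ) - vN k i = eN k i + (2*k+1) ∨
    (vN k (i+1) : ℤ) - vN k i = -eN k i - (2*k+1) := by
  rcases (by omega : k%4 = 0 ∨ k%4 = 1 ∨ k%4 = 2 ∨ k%4 = 3) with h4|h4|h4|h4 <;>
    simp only [vN, eN, h4] <;> norm_num <;> first | omega | (split_ifs <;> omega)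

/-- cast-injectivity within a window -/
theorem zmod_int_ne (k : ℕ) (a b : ℤ) (hne : a ≠ b) (h1 : a - b < 2*k+1) (h2 : b - a < 2*k+1) :
    ((a : ZMod (2*k+1)) ≠ (b : ZMod (2*k+1))) := by
  intro h
  rw [ZMod.intCast_eq_intCast_iff] at h
  have hd : ((2*k+1 : ℕ) : ℤ) ∣ b - a := Int.ModEq.dvd h
  have h0 := Int.eq_zero_of_abs_lt_dvd hd (by rw [abs_lt]; push_cast; omega)
  omega

theorem hzero_cast (k : ℕ) : (((2*k+1 : ℕ) : ℤ) : ZMod (2*k+1)) = 0 := by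
  rw [Int.cast_natCast, ZMod.natCast_self]

noncomputable def Lfun (k i : ℕ) : ZMod (2*k+1) :=
  (((vN k (i+1) : ℤ) - (vN k i : ℤ) : ℤ) : ZMod (2*k+1))

theorem Lfun_eq (k i : ℕ) (hk : 3 ≤ k) (hi : i < k) :
    Lfun k i = ((eN k i : ℤ) : ZMod (2*k+1)) ∨
    Lfun k i = -(((eN k i : ℤ)) : ZMod (2*k+1)) := by
  have hdvd : ∀ a b : ℤ, ((2*k+1 : ℕ) : ℤ) ∣ (b - a) →
      ((a : ZMod (2*k+1)) = (b : ZMod (2*k+1))) := by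
    intro a b hd
    rw [ZMod.intCast_eq_intCast_iff]
    exact Int.modEq_iff_dvd.mpr hd
  have hneg : -(((eN k i : ℤ)) : ZMod (2*k+1)) = (((-(eN k i : ℤ)) : ℤ) : ZMod (2*k+1)) := by
    push_cast; ring
  unfold Lfun
  rcases vN_step k i hk hi with h|h|h|h|h|h
  · left; rw [h]
  · right; rw [hneg, h]
  · left; rw [h]; exact hdvd _ _ ⟨1, by push_cast; ring⟩
  · right; rw [hneg, h]; exact hdvd _ _ ⟨-1, by push_cast; ring⟩
  · left; rw [h]; exact hdvd _ _ ⟨-1, by push_cast; ring⟩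
  · right; rw [hneg, h]; exact hdvd _ _ ⟨1, by push_cast; ring⟩

/-- For every integer `k ≥ 3` there is a half-set of `ZMod (2k+1)` which sums to zero
and admits a simple ordering (pairwise distinct partial sums). -/
theorem stmt_0 (k : ℕ) (hk : 3 ≤ k) :
    ∃ ℓ : Fin k → ZMod (2 * k + 1),
      Function.Injective ℓ ∧
      (Set.range ℓ ∪ Set.range (fun i => -ℓ i) = {(0 : ZMod (2 * k + 1))}ᶜ) ∧
      (∑ i, ℓ i) = 0 ∧
      Function.Injective (fun i : Fin k => ∑ j ∈ Finset.Iic i, ℓ j) := by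
  haveI : NeZero (2*k+1) := ⟨by omega⟩
  set Lf : Fin k → ZMod (2*k+1) := fun i => Lfun k i.val with hLf
  set E : Fin k → ZMod (2*k+1) := fun i => ((eN k i.val : ℤ) : ZMod (2*k+1)) with hE
  have hLe : ∀ i : Fin k, Lf i = E i ∨ Lf i = -E i := fun i => Lfun_eq k i.val hk i.isLt
  have hEb : ∀ i : Fin k, 1 ≤ eN k i.val ∧ eN k i.val ≤ k := fun i => eN_bounds k i.val hk i.isLt
  have hENeg : ∀ i j : Fin k, E i ≠ -E j := by
    intro i j
    have h1 := hEb i; have h2 := hEb j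
    have hre : -E j = (((-(eN k j.val : ℤ)) : ℤ) : ZMod (2*k+1)) := by
      simp only [hE]; push_cast; ring
    rw [hre, hE]
    apply zmod_int_ne k _ _ (by omega) (by omega) (by omega)
  have hEinj : ∀ i j : Fin k, i ≠ j → E i ≠ E j := by
    intro i j hij
    have h1 := hEb i; have h2 := hEb j
    have hvij : i.val ≠ j.val := fun hc => hij (Fin.ext hc)
    have hne : eN k i.val ≠ eN k j.val := by
      rcases hvij.lt_or_gt with h|h
      · exact eN_inj k _ _ hk h j.isLt
      · exact (eN_inj k _ _ hk h i.isLt).symm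
    rw [hE]
    apply zmod_int_ne k _ _ (by exact_mod_cast hne) (by omega) (by omega)
  have hLne0 : ∀ i : Fin k, Lf i ≠ 0 := by
    intro i
    have h1 := hEb i
    have hE0 : E i ≠ 0 := by
      have h00 : (0 : ZMod (2*k+1)) = ((0 : ℤ) : ZMod (2*k+1)) := by norm_num
      rw [h00, hE]
      apply zmod_int_ne k _ _ (by omega) (by omega) (by omega)
    rcases hLe i with h|h <;> rw [h]
    · exact hE0
    · simpa [neg_eq_zero] using hE0
  have hLinj : Function.Injective Lf := by
    intro i j h
    by_contra hij
    rcases hLe i with h1|h1 <;> rcases hLe j with h2|h2 <;> rw [h1, h2] at h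
    · exact hEinj i j hij h
    · exact hENeg i j h
    · exact hENeg j i h.symm
    · exact hEinj i j hij (neg_injective h)
  have hLNeg : ∀ i j : Fin k, Lf i ≠ -Lf j := by
    intro i j h
    rcases hLe i with h1|h1 <;> rcases hLe j with h2|h2
    · rw [h1, h2] at h; exact hENeg i j h
    · rw [h1, h2, neg_neg] at h
      rcases eq_or_ne i j with rfl|hij
      · exact hENeg i i (h1.symm.trans h2)
      · exact hEinj i j hij h
    · rw [h1, h2] at h
      rcases eq_or_ne i j with rfl|hij
      · exact hENeg i i (h2.symm.trans h1)
      · exact hEinj i j hij (neg_injective h)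
    · rw [h1, h2, neg_neg] at h
      exact hENeg j i h.symm
  have key : ∀ N (hN : N < k), (∑ j ∈ Finset.Iic (⟨N, hN⟩ : Fin k), Lf j)
      = ((vN k (N+1) : ℤ) : ZMod (2*k+1)) := by
    intro N
    induction N with
    | zero =>
      intro hN
      have hIic : (Finset.Iic (⟨0, hN⟩ : Fin k)) = {⟨0, hN⟩} := by
        ext x; simp [Finset.mem_Iic, Fin.le_def, Fin.ext_iff] <;> omega
      rw [hIic, Finset.sum_singleton]
      show Lfun k 0 = _
      unfold Lfun
      rw [vN_zero k hk]
      push_cast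
      ring
    | succ N ih =>
      intro hN
      have hN' : N < k := by omega
      have hins : Finset.Iic (⟨N+1, hN⟩ : Fin k)
          = insert ⟨N+1, hN⟩ (Finset.Iic (⟨N, hN'⟩ : Fin k)) := by
        ext x; simp [Finset.mem_Iic, Fin.le_def, Fin.ext_iff] <;> omega
      have hnotmem : (⟨N+1, hN⟩ : Fin k) ∉ Finset.Iic (⟨N, hN'⟩ : Fin k) := by
        simp [Finset.mem_Iic, Fin.le_def]
      rw [hins, Finset.sum_insert hnotmem, ih hN']
      show Lfun k (N+1) + _ = _
      unfold Lfun
      push_cast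
      ring
  refine ⟨Lf, hLinj, ?_, ?_, ?_⟩
  · -- union of ranges
    classical
    set S : Finset (ZMod (2*k+1)) :=
      Finset.univ.image Lf ∪ Finset.univ.image (fun i => -Lf i) with hS
    have hdisj : Disjoint (Finset.univ.image Lf) (Finset.univ.image (fun i => -Lf i)) := by
      rw [Finset.disjoint_left]
      intro x hx hx'
      obtain ⟨i, _, hi⟩ := Finset.mem_image.mp hx
      obtain ⟨j, _, hj⟩ := Finset.mem_image.mp hx'
      exact hLNeg i j (by rw [hi, ← hj])
    have hcard : S.card = 2*k := by
      rw [hS, Finset.card_union_of_disjoint hdisj,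
        Finset.card_image_of_injective _ hLinj,
        Finset.card_image_of_injective _ (fun a b hab => hLinj (neg_injective hab)),
        Finset.card_univ, Fintype.card_fin]
      ring
    have hsub : S ⊆ Finset.univ.erase 0 := by
      intro x hx
      rw [Finset.mem_erase]
      refine ⟨?_, Finset.mem_univ x⟩
      rw [hS, Finset.mem_union] at hx
      rcases hx with hx|hx <;> obtain ⟨i, _, hi⟩ := Finset.mem_image.mp hx
      · rw [← hi]; exact hLne0 i
      · rw [← hi]; simpa [neg_eq_zero] using hLne0 i
    have hScard_eq : S = Finset.univ.erase 0 := by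
      apply Finset.eq_of_subset_of_card_le hsub
      rw [hcard, Finset.card_erase_of_mem (Finset.mem_univ _), Finset.card_univ, ZMod.card]
      omega
    ext x
    simp only [Set.mem_union, Set.mem_range, Set.mem_compl_iff, Set.mem_singleton_iff]
    constructor
    · rintro (⟨i, rfl⟩|⟨i, rfl⟩)
      · exact hLne0 i
      · simpa [neg_eq_zero] using hLne0 i
    · intro hx
      have hxS : x ∈ S := by
        rw [hScard_eq, Finset.mem_erase]
        exact ⟨hx, Finset.mem_univ x⟩
      rw [hS, Finset.mem_union] at hxS
      rcases hxS with h|h <;> obtain ⟨i, _, hi⟩ := Finset.mem_image.mp h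
      · exact Or.inl ⟨i, hi⟩
      · exact Or.inr ⟨i, hi⟩
  · -- total sum is zero
    have huniv : (Finset.univ : Finset (Fin k)) = Finset.Iic (⟨k-1, by omega⟩ : Fin k) := by
      ext x; simp [Finset.mem_Iic, Fin.le_def] <;> omega
    rw [huniv, key (k-1) (by omega)]
    have hk1 : k - 1 + 1 = k := by omega
    rw [hk1]
    rcases vN_last k hk with h|h <;> rw [h]
    · norm_num
    · exact_mod_cast ZMod.natCast_self (2*k+1)
  · -- partial sums injective
    intro i j h
    have h' : (∑ l ∈ Finset.Iic i, Lf l) = ∑ l ∈ Finset.Iic j, Lf l := h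
    rw [show (Finset.Iic i) = Finset.Iic (⟨i.val, i.isLt⟩ : Fin k) by rfl,
      show (Finset.Iic j) = Finset.Iic (⟨j.val, j.isLt⟩ : Fin k) by rfl,
      key i.val i.isLt, key j.val j.isLt] at h'
    by_contra hij
    have hvij : i.val ≠ j.val := fun hc => hij (Fin.ext hc)
    rcases hvij.lt_or_gt with hlt|hlt
    · have hw := vN_window k (i.val+1) (j.val+1) hk (by omega) (by omega) (by omega)
      exact zmod_int_ne k _ _ (by exact_mod_cast hw.1) (by omega) (by omega) h'
    · have hw := vN_window k (j.val+1) (i.val+1) hk (by omega) (by omega) (by omega)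
      exact zmod_int_ne k _ _ (by exact_mod_cast hw.1.symm) (by omega) (by omega) h'
end

section
/- For every integer k ≥ 3 with k ≡ 0 (mod 4) or k ≡ 3 (mod 4), there exists a set L of integer representatives {ℓ_0,…,ℓ_{k−1}} with 1 ≤ |ℓ_i| ≤ k, |ℓ_i| pairwise distinct, such that ℓ_0 + ⋯ + ℓ_{k−1} = 0 in the integers (not just modulo 2k+1), and L admits an ordering whose partial sums are pairwise distinct modulo 2k+1. -/
/-- Rosa-style graceful labeling of the cycle `C_k`, extended by `0` at `i ≥ k`. -/
def rosaV (k i : ℕ) : ℕ :=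
  if k ≤ i then 0
  else if i % 2 = 0 then i / 2
  else if i / 2 < (k + 3) / 4 then k - i / 2 else k - i / 2 - 1

/-- The absolute difference along the `i`-th edge of the cycle. -/
def rosaW (k i : ℕ) : ℕ :=
  (rosaV k (i + 1) - rosaV k i) + (rosaV k i - rosaV k (i + 1))

lemma rosaV_le (k i : ℕ) : rosaV k i ≤ k := by
  unfold rosaV; split_ifs <;> omega

lemma rosaV_inj (k : ℕ) (hk : 3 ≤ k) : ∀ i j : ℕ, 1 ≤ i → i ≤ k → 1 ≤ j → j ≤ k →
    rosaV k i = rosaV k j → i = j := by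
  intro i j hi hik hj hjk h
  unfold rosaV at h
  split_ifs at h <;> omega

lemma rosaW_eq (k : ℕ) (hk : 3 ≤ k) (hmod : k % 4 = 0 ∨ k % 4 = 3) :
    ∀ i : ℕ, i < k → rosaW k i =
      if i + 1 = k then k / 2
      else if i < 2 * ((k + 3) / 4) then k - i else k - i - 1 := by
  intro i hik
  unfold rosaW rosaV
  split_ifs <;> omega

lemma rosaW_bound (k : ℕ) (hk : 3 ≤ k) (hmod : k % 4 = 0 ∨ k % 4 = 3) :
    ∀ i : ℕ, i < k → 1 ≤ rosaW k i ∧ rosaW k i ≤ k := by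
  intro i hik
  rw [rosaW_eq k hk hmod i hik]
  split_ifs <;> omega

lemma rosaW_inj (k : ℕ) (hk : 3 ≤ k) (hmod : k % 4 = 0 ∨ k % 4 = 3) :
    ∀ i j : ℕ, i < k → j < k → rosaW k i = rosaW k j → i = j := by
  intro i j hik hjk h
  rw [rosaW_eq k hk hmod i hik, rosaW_eq k hk hmod j hjk] at h
  split_ifs at h <;> omega

lemma absdiff_cast (a b : ℕ) : |(a : ℤ) - b| = (((a - b) + (b - a) : ℕ) : ℤ) := by
  rcases abs_cases ((a : ℤ) - (b : ℤ)) with ⟨h1, h2⟩ | ⟨h1, h2⟩ <;> rw [h1] <;> omega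

/-- For `k ≡ 0, 3 (mod 4)`, `k ≥ 3`, there is an integer half-set (representatives with
pairwise distinct absolute values in `[1,k]`) summing to `0` in `ℤ`, admitting an ordering
whose partial sums are pairwise distinct modulo `2k+1`. -/
theorem stmt_1 (k : ℕ) (hk : 3 ≤ k) (hmod : k % 4 = 0 ∨ k % 4 = 3) :
    ∃ ℓ : Fin k → ℤ,
      (∀ i, 1 ≤ |ℓ i| ∧ |ℓ i| ≤ (k : ℤ)) ∧
      Function.Injective (fun i => |ℓ i|) ∧
      (∑ i, ℓ i) = 0 ∧
      Function.Injective
        (fun i : Fin k => ((∑ j ∈ Finset.Iic i, ℓ j : ℤ) : ZMod (2 * k + 1))) := by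
  refine ⟨fun i => (rosaV k (i + 1) : ℤ) - rosaV k i, ?_, ?_, ?_, ?_⟩
  · intro i
    rw [absdiff_cast]
    have := rosaW_bound k hk hmod i i.isLt
    unfold rosaW at this
    constructor <;> omega
  · intro i j h
    simp only [absdiff_cast] at h
    have h' : rosaW k i = rosaW k j := by unfold rosaW; exact_mod_cast h
    exact Fin.ext (rosaW_inj k hk hmod i j i.isLt j.isLt h')
  · rw [Fin.sum_univ_eq_sum_range (fun i => (rosaV k (i + 1) : ℤ) - rosaV k i)]
    rw [Finset.sum_range_sub (fun i => (rosaV k i : ℤ))]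
    have h0 : rosaV k k = 0 := by unfold rosaV; simp
    have h1 : rosaV k 0 = 0 := by unfold rosaV; split_ifs <;> omega
    rw [h0, h1]; ring
  · have key : ∀ i : Fin k, (∑ j ∈ Finset.Iic i, ((rosaV k (j + 1) : ℤ) - rosaV k j))
        = (rosaV k (i + 1) : ℤ) := by
      intro i
      have hmap : (Finset.Iic i).map Fin.valEmbedding = Finset.Iic (i : ℕ) :=
        Fin.map_valEmbedding_Iic i
      have h2 : (∑ j ∈ Finset.Iic i, ((rosaV k (j + 1) : ℤ) - rosaV k j))
          = ∑ j ∈ Finset.Iic (i : ℕ), ((rosaV k (j + 1) : ℤ) - rosaV k j) := by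
        rw [← hmap, Finset.sum_map]
        rfl
      rw [h2]
      have hIic : Finset.Iic (i : ℕ) = Finset.range ((i : ℕ) + 1) := by
        ext x; simp [Nat.lt_succ_iff]
      rw [hIic, Finset.sum_range_sub (fun i => (rosaV k i : ℤ))]
      have h1 : rosaV k 0 = 0 := by unfold rosaV; split_ifs <;> omega
      rw [h1]; push_cast; ring
    intro i j h
    simp only [key] at h
    have h' : ((rosaV k (i + 1) : ℕ) : ZMod (2 * k + 1)) = ((rosaV k (j + 1) : ℕ) : ZMod (2 * k + 1)) := by
      exact_mod_cast h
    rw [ZMod.natCast_eq_natCast_iff'] at h'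
    have hi := rosaV_le k (i + 1)
    have hj := rosaV_le k (j + 1)
    rw [Nat.mod_eq_of_lt (by omega), Nat.mod_eq_of_lt (by omega)] at h'
    have := rosaV_inj k hk ((i : ℕ) + 1) ((j : ℕ) + 1) (by omega) (by omega) (by omega) (by omega) h'
    exact Fin.ext (by omega)
end

section
/- Let k ≥ 3 be odd and define a_0 = a_{k−1} = 1, a_i = −2 for odd i with 1 ≤ i ≤ k−2, and a_i = 2 for even i with 2 ≤ i ≤ k−3. For each i ∈ [0,k−1], let S_i = Σ_{j=0}^{k−1} j·a_{(i+j) mod k}. Then S_0 = 0; S_i = k whenever i is odd; and S_i = −k whenever i ≥ 2 is even. -/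
/-- For odd `k ≥ 3` and the sequence `a` as in Lemma `sequence lemma`, the cyclically
shifted weighted sums `S i = ∑ j, j * a ((i+j) % k)` satisfy `S 0 = 0`, `S i = k` for odd
`i`, and `S i = -k` for even `i ≥ 2`. -/
theorem stmt_3 (k : ℕ) (hk : 3 ≤ k) (hodd : Odd k) (a : ℕ → ℤ)
    (h0 : a 0 = 1) (hlast : a (k - 1) = 1)
    (hod : ∀ i, Odd i → 1 ≤ i → i ≤ k - 2 → a i = -2)
    (hev : ∀ i, Even i → 2 ≤ i → i ≤ k - 3 → a i = 2) :
    (∑ j ∈ Finset.range k, (j : ℤ) * a ((0 + j) % k)) = 0 ∧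
    (∀ i, i < k → Odd i →
      (∑ j ∈ Finset.range k, (j : ℤ) * a ((i + j) % k)) = (k : ℤ)) ∧
    (∀ i, i < k → Even i → 2 ≤ i →
      (∑ j ∈ Finset.range k, (j : ℤ) * a ((i + j) % k)) = -(k : ℤ)) := by
  obtain ⟨t, ht⟩ := hodd
  obtain ⟨s, hs⟩ : ∃ s, t = s + 1 := ⟨t - 1, by omega⟩
  have hk' : k = 2 * s + 3 := by omega
  clear ht hs
  -- partial sums of a
  have hpartial : ∀ m, 2 * m + 3 ≤ k → (∑ j ∈ Finset.range (2 * m + 1), a j) = 1 := by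
    intro m
    induction m with
    | zero => intro _; simpa using h0
    | succ n ih =>
      intro hmk
      have h1 : 2 * (n + 1) + 1 = (2 * n + 1) + 1 + 1 := by ring
      rw [h1, Finset.sum_range_succ, Finset.sum_range_succ, ih (by omega),
        hod (2 * n + 1) ⟨n, by ring⟩ (by omega) (by omega),
        hev (2 * n + 1 + 1) ⟨n + 1, by ring⟩ (by omega) (by omega)]
      ring
  have hsumA : (∑ j ∈ Finset.range k, a j) = 0 := by
    rw [show k = (2 * s + 1) + 1 + 1 by omega, Finset.sum_range_succ, Finset.sum_range_succ,
      hpartial s (by omega),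
      hod (2 * s + 1) ⟨s, by ring⟩ (by omega) (by omega),
      show 2 * s + 1 + 1 = k - 1 by omega, hlast]
    ring
  -- partial weighted sums of a
  have hpartialW : ∀ m, 2 * m + 3 ≤ k →
      (∑ j ∈ Finset.range (2 * m + 1), (j : ℤ) * a j) = 2 * m := by
    intro m
    induction m with
    | zero => intro _; simp
    | succ n ih =>
      intro hmk
      have h1 : 2 * (n + 1) + 1 = (2 * n + 1) + 1 + 1 := by ring
      rw [h1, Finset.sum_range_succ, Finset.sum_range_succ, ih (by omega),
        hod (2 * n + 1) ⟨n, by ring⟩ (by omega) (by omega),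
        hev (2 * n + 1 + 1) ⟨n + 1, by ring⟩ (by omega) (by omega)]
      push_cast
      ring
  have hS0 : (∑ j ∈ Finset.range k, (j : ℤ) * a j) = 0 := by
    rw [show k = (2 * s + 1) + 1 + 1 by omega, Finset.sum_range_succ, Finset.sum_range_succ,
      hpartialW s (by omega),
      hod (2 * s + 1) ⟨s, by ring⟩ (by omega) (by omega),
      show 2 * s + 1 + 1 = k - 1 by omega, hlast,
      show (((k - 1 : ℕ)) : ℤ) = 2 * (s : ℤ) + 2 by omega]
    push_cast
    ring
  -- the unweighted shifted sums are all zero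
  have hTshift : ∀ i, (∑ j ∈ Finset.range k, a ((i + 1 + j) % k)) =
      ∑ j ∈ Finset.range k, a ((i + j) % k) := by
    intro i
    have h1 : (∑ j ∈ Finset.range k, a ((i + 1 + j) % k)) =
        ∑ j ∈ Finset.range k, a ((i + (j + 1)) % k) := by
      apply Finset.sum_congr rfl
      intro j _
      congr 2
      omega
    have h2 := Finset.sum_range_succ' (fun j => a ((i + j) % k)) k
    have h3 := Finset.sum_range_succ (fun j => a ((i + j) % k)) k
    have h4 : (i + k) % k = (i + 0) % k := by
      rw [Nat.add_mod_right, Nat.add_zero]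
    rw [h4] at h3
    rw [h1]
    rw [h3] at h2
    linarith
  have hT : ∀ i, (∑ j ∈ Finset.range k, a ((i + j) % k)) = 0 := by
    intro i
    induction i with
    | zero =>
      have h1 : (∑ j ∈ Finset.range k, a ((0 + j) % k)) = ∑ j ∈ Finset.range k, a j := by
        apply Finset.sum_congr rfl
        intro j hj
        rw [Nat.zero_add, Nat.mod_eq_of_lt (Finset.mem_range.mp hj)]
      rw [h1, hsumA]
    | succ n ih => rw [hTshift n, ih]
  -- recurrence for the weighted sums
  have hSrec : ∀ i, (∑ j ∈ Finset.range k, (j : ℤ) * a ((i + 1 + j) % k)) =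
      (∑ j ∈ Finset.range k, (j : ℤ) * a ((i + j) % k)) + (k : ℤ) * a (i % k) := by
    intro i
    have h1 : (∑ j ∈ Finset.range k, (j : ℤ) * a ((i + 1 + j) % k)) =
        ∑ j ∈ Finset.range k,
          ((((j + 1 : ℕ)) : ℤ) * a ((i + (j + 1)) % k) - a ((i + (j + 1)) % k)) := by
      apply Finset.sum_congr rfl
      intro j _
      have hj : i + 1 + j = i + (j + 1) := by omega
      rw [hj]
      push_cast
      ring
    rw [h1, Finset.sum_sub_distrib]
    have h2 := Finset.sum_range_succ' (fun j => (j : ℤ) * a ((i + j) % k)) k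
    have h3 := Finset.sum_range_succ (fun j => (j : ℤ) * a ((i + j) % k)) k
    simp only [Nat.cast_zero, zero_mul, add_zero] at h2 h3
    have h4 : (i + k) % k = i % k := Nat.add_mod_right i k
    rw [h4] at h3
    rw [h3] at h2
    have h5 : (∑ j ∈ Finset.range k, a ((i + (j + 1)) % k)) = 0 := by
      have h6 : (∑ j ∈ Finset.range k, a ((i + (j + 1)) % k)) =
          ∑ j ∈ Finset.range k, a ((i + 1 + j) % k) := by
        apply Finset.sum_congr rfl
        intro j _
        congr 2
        omega
      rw [h6, hT (i + 1)]
    rw [h5, ← h2]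
    ring
  -- the key induction
  have key : ∀ i, i < k →
      (∑ j ∈ Finset.range k, (j : ℤ) * a ((i + j) % k)) =
        (if i = 0 then 0 else if Odd i then (k : ℤ) else -(k : ℤ)) := by
    intro i
    induction i with
    | zero =>
      intro _
      have h1 : (∑ j ∈ Finset.range k, (j : ℤ) * a ((0 + j) % k)) =
          ∑ j ∈ Finset.range k, (j : ℤ) * a j := by
        apply Finset.sum_congr rfl
        intro j hj
        rw [Nat.zero_add, Nat.mod_eq_of_lt (Finset.mem_range.mp hj)]
      rw [h1, hS0]
      simp
    | succ n ih =>
      intro hn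
      have hlt : n < k := by omega
      have hrec := hSrec n
      rw [Nat.mod_eq_of_lt hlt] at hrec
      rw [hrec, ih hlt]
      rcases Nat.eq_zero_or_pos n with hz | hpos
      · subst hz
        rw [if_pos rfl, if_neg (by omega), if_pos (by decide : Odd 1), h0]
        ring
      · rcases Nat.even_or_odd n with he | ho
        · -- n even, n ≥ 2, so a n = 2, sum goes from -k to k
          have hn2 : 2 ≤ n := by
            obtain ⟨u, hu⟩ := he
            omega
          have hn3 : n ≤ k - 3 := by
            obtain ⟨u, hu⟩ := he
            omega
          have hnodd : ¬ Odd n := by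
            rw [Nat.odd_iff]
            obtain ⟨u, hu⟩ := he
            omega
          have hsodd : Odd (n + 1) := by
            rw [Nat.odd_iff]
            obtain ⟨u, hu⟩ := he
            omega
          rw [hev n he hn2 hn3, if_neg (by omega), if_neg hnodd,
            if_neg (by omega), if_pos hsodd]
          ring
        · -- n odd, a n = -2, sum goes from k to -k
          have hnodd : Odd n := ho
          have hsodd : ¬ Odd (n + 1) := by
            rw [Nat.odd_iff] at hnodd ⊢
            omega
          rw [hod n ho (by omega) (by omega), if_neg (by omega), if_pos hnodd,
            if_neg (by omega), if_neg hsodd]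
          ring
  refine ⟨?_, ?_, ?_⟩
  · have := key 0 (by omega)
    simpa using this
  · intro i hi hio
    have := key i hi
    have hi0 : i ≠ 0 := by
      rintro rfl
      exact (by decide : ¬ Odd 0) hio
    rw [if_neg hi0, if_pos hio] at this
    exact this
  · intro i hi hie hi2
    have := key i hi
    have hio : ¬ Odd i := by
      rw [Nat.odd_iff]
      obtain ⟨u, hu⟩ := hie
      omega
    rw [if_neg (by omega), if_neg hio] at this
    exact this
end

section
/- Let k ≥ 3 be odd and define a_0 = a_{k−1} = 1, a_i = −2 for odd i with 1 ≤ i ≤ k−2, and a_i = 2 for even i with 2 ≤ i ≤ k−3. Then for every i ∈ [0,k−1], the sum Σ_{j=0}^{k−1} j·a_{(i+j) mod k} is congruent to 0 modulo k. -/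
lemma sumA (n : ℕ) : ∑ m ∈ Finset.Ico 1 (2*n+2), (-1:ℤ)^m = -1 := by
  induction n with
  | zero => norm_num
  | succ n ih =>
    have h1 : 2*(n+1)+2 = (2*n+2) + 1 + 1 := by ring
    rw [h1, Finset.sum_Ico_succ_top (by omega), Finset.sum_Ico_succ_top (by omega), ih,
      Even.neg_one_pow ⟨n+1, by ring⟩, Odd.neg_one_pow ⟨n+1, by ring⟩]
    ring

lemma sumB (n : ℕ) : ∑ m ∈ Finset.Ico 1 (2*n+2), (m:ℤ)*(-1)^m = -(n+1) := by
  induction n with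
  | zero => norm_num
  | succ n ih =>
    have h1 : 2*(n+1)+2 = (2*n+2) + 1 + 1 := by ring
    rw [h1, Finset.sum_Ico_succ_top (by omega), Finset.sum_Ico_succ_top (by omega), ih,
      Even.neg_one_pow ⟨n+1, by ring⟩, Odd.neg_one_pow ⟨n+1, by ring⟩]
    push_cast
    ring

/-- For odd `k ≥ 3` and the sequence `a` as in Lemma `sequence lemma`, every cyclically
shifted weighted sum `∑ j, j * a ((i+j) % k)` is divisible by `k`. -/
theorem stmt_4 (k : ℕ) (hk : 3 ≤ k) (hodd : Odd k) (a : ℕ → ℤ)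
    (h0 : a 0 = 1) (hlast : a (k - 1) = 1)
    (hod : ∀ i, Odd i → 1 ≤ i → i ≤ k - 2 → a i = -2)
    (hev : ∀ i, Even i → 2 ≤ i → i ≤ k - 3 → a i = 2) :
    ∀ i, i < k → (k : ℤ) ∣ ∑ j ∈ Finset.range k, (j : ℤ) * a ((i + j) % k) := by
  obtain ⟨s, rfl⟩ : ∃ s, k = 2*s+3 := by
    obtain ⟨t, ht⟩ := hodd; exact ⟨t-1, by omega⟩
  set K := 2*s+3 with hK
  have hmid : ∀ m ∈ Finset.Ico 1 (2*s+2), a m = 2 * (-1:ℤ)^m := by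
    intro m hm
    simp only [Finset.mem_Ico] at hm
    rcases Nat.even_or_odd m with he | ho
    · obtain ⟨r, hr⟩ := he
      rw [hev m ⟨r, hr⟩ (by omega) (by omega), Even.neg_one_pow ⟨r, hr⟩]; ring
    · rw [hod m ho hm.1 (by omega), Odd.neg_one_pow ho]; ring
  have hlast' : a (2*s+2) = 1 := by
    have : K - 1 = 2*s+2 := by omega
    rwa [this] at hlast
  have hsum0 : ∑ m ∈ Finset.range K, a m = 0 := by
    rw [show K = (2*s+2)+1 by omega, Finset.sum_range_succ, Finset.range_eq_Ico,
      Finset.sum_eq_sum_Ico_succ_bot (by omega), Finset.sum_congr rfl hmid, h0, hlast',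
      ← Finset.mul_sum, sumA]
    ring
  have hsum1 : ∑ m ∈ Finset.range K, (m:ℤ) * a m = 0 := by
    rw [show K = (2*s+2)+1 by omega, Finset.sum_range_succ, Finset.range_eq_Ico,
      Finset.sum_eq_sum_Ico_succ_bot (by omega), hlast']
    have : ∑ m ∈ Finset.Ico (0+1) (2*s+2), (m:ℤ) * a m
        = ∑ m ∈ Finset.Ico 1 (2*s+2), (m:ℤ) * (2 * (-1)^m) := by
      refine Finset.sum_congr rfl fun m hm => ?_
      rw [hmid m hm]
    rw [this]
    have : ∑ m ∈ Finset.Ico 1 (2*s+2), (m:ℤ) * (2 * (-1)^m)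
        = 2 * ∑ m ∈ Finset.Ico 1 (2*s+2), (m:ℤ) * (-1)^m := by
      rw [Finset.mul_sum]; refine Finset.sum_congr rfl fun m hm => by ring
    rw [this, sumB]
    push_cast
    ring
  haveI : NeZero K := ⟨by omega⟩
  intro i hi
  rw [← ZMod.intCast_zmod_eq_zero_iff_dvd]
  push_cast
  have key : (∑ j ∈ Finset.range K, (j : ZMod K) * ((a ((i+j)%K) : ℤ) : ZMod K))
      = ∑ m ∈ Finset.range K, (((m:ZMod K) - (i : ZMod K)) * ((a m : ℤ) : ZMod K)) := by
    refine Finset.sum_nbij' (fun j => (i+j)%K) (fun m => (m + (K - i))%K) ?_ ?_ ?_ ?_ ?_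
    · intro j hj
      exact Finset.mem_range.mpr (Nat.mod_lt _ (by omega))
    · intro m hm
      exact Finset.mem_range.mpr (Nat.mod_lt _ (by omega))
    · intro j hj
      simp only [Finset.mem_range] at hj
      show ((i+j)%K + (K - i))%K = j
      rw [Nat.mod_add_mod, show i + j + (K - i) = j + K by omega, Nat.add_mod_right,
        Nat.mod_eq_of_lt hj]
    · intro m hm
      simp only [Finset.mem_range] at hm
      show (i + (m + (K - i))%K)%K = m
      rw [Nat.add_mod_mod, show i + (m + (K - i)) = m + K by omega, Nat.add_mod_right,
        Nat.mod_eq_of_lt hm]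
    · intro j hj
      simp only [Finset.mem_range] at hj
      have : (((i+j)%K : ℕ) : ZMod K) = (i : ZMod K) + (j : ZMod K) := by
        rw [ZMod.natCast_mod]; push_cast; ring
      rw [this]
      ring
  rw [key]
  have e1 : (∑ m ∈ Finset.range K, (m : ZMod K) * ((a m : ℤ) : ZMod K)) = 0 := by
    have := congrArg (fun z : ℤ => (z : ZMod K)) hsum1
    push_cast at this
    simpa using this
  have e2 : (∑ m ∈ Finset.range K, ((a m : ℤ) : ZMod K)) = 0 := by
    have := congrArg (fun z : ℤ => (z : ZMod K)) hsum0
    push_cast at this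
    simpa using this
  simp only [sub_mul]
  rw [Finset.sum_sub_distrib, ← Finset.mul_sum, e1, e2]
  ring
end

section
/- Let p ≥ 3 be a prime and 3 ≤ k ≤ p, and let B_{i,j} = { a_m·(i + j·m)·(2k+1) + ℓ_m : m ∈ [0,k−1] } ⊆ Z_{p(2k+1)}, where the ℓ_m are pairwise incongruent modulo 2k+1 and each a_m is coprime to p. If (i_1,j_1) ≠ (i_2,j_2) with i_1,i_2,j_1,j_2 ∈ [0,p−1], then |B_{i_1,j_1} ∩ B_{i_2,j_2}| ≤ 1. -/
/-- Distinct blocks `B i j` intersect in at most one element, provided the `ℓ m` are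
pairwise incongruent mod `2k+1` and every `a m` is coprime to `p`. -/
theorem stmt_10 (p k : ℕ) (hp : p.Prime) (hp3 : 3 ≤ p) (hk3 : 3 ≤ k) (hkp : k ≤ p)
    (a ℓ : Fin k → ℤ)
    (hℓ : Function.Injective fun m : Fin k => ((ℓ m : ℤ) : ZMod (2 * k + 1)))
    (ha : ∀ m, IsCoprime (a m) (p : ℤ))
    (B : ℕ → ℕ → Finset (ZMod (p * (2 * k + 1))))
    (hB : ∀ i j, B i j = Finset.image
      (fun m : Fin k =>
        ((a m * ((i + j * (m : ℕ)) * (2 * k + 1)) + ℓ m : ℤ) : ZMod (p * (2 * k + 1))))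
      Finset.univ) :
    ∀ i₁ j₁ i₂ j₂ : ℕ, i₁ < p → j₁ < p → i₂ < p → j₂ < p → (i₁, j₁) ≠ (i₂, j₂) →
      (B i₁ j₁ ∩ B i₂ j₂).card ≤ 1 := by
  intro i₁ j₁ i₂ j₂ hi₁ hj₁ hi₂ hj₂ hne
  rw [Finset.card_le_one]
  intro x hx y hy
  rw [Finset.mem_inter, hB, hB] at hx hy
  simp only [Finset.mem_image, Finset.mem_univ, true_and] at hx hy
  obtain ⟨⟨m1, hm1⟩, ⟨m1', hm1'⟩⟩ := hx
  obtain ⟨⟨m2, hm2⟩, ⟨m2', hm2'⟩⟩ := hy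
  -- matching indices: equal elements must come from the same m
  have key : ∀ (m m' : Fin k) (i j i' j' : ℕ),
      ((a m * ((i + j * (m : ℕ)) * (2 * k + 1)) + ℓ m : ℤ) : ZMod (p * (2 * k + 1))) =
      ((a m' * ((i' + j' * (m' : ℕ)) * (2 * k + 1)) + ℓ m' : ℤ) : ZMod (p * (2 * k + 1))) →
      m = m' := by
    intro m m' i j i' j' h
    apply hℓ
    have h2 := (ZMod.intCast_eq_intCast_iff _ _ _).mp h
    have h3 : (a m * ((i + j * (m : ℕ)) * (2 * k + 1)) + ℓ m : ℤ) ≡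
        (a m' * ((i' + j' * (m' : ℕ)) * (2 * k + 1)) + ℓ m' : ℤ) [ZMOD (2 * k + 1 : ℕ)] :=
      h2.of_dvd (by push_cast; exact ⟨p, by ring⟩)
    have h4 : (ℓ m : ℤ) ≡ (ℓ m' : ℤ) [ZMOD (2 * k + 1 : ℕ)] := by
      have e1 : (a m * ((i + j * (m : ℕ)) * (2 * k + 1)) + ℓ m : ℤ) ≡ ℓ m
          [ZMOD (2 * k + 1 : ℕ)] := by
        rw [Int.modEq_iff_dvd]
        push_cast
        exact ⟨-(a m * (i + j * (m : ℕ))), by ring⟩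
      have e2 : (a m' * ((i' + j' * (m' : ℕ)) * (2 * k + 1)) + ℓ m' : ℤ) ≡ ℓ m'
          [ZMOD (2 * k + 1 : ℕ)] := by
        rw [Int.modEq_iff_dvd]
        push_cast
        exact ⟨-(a m' * (i' + j' * (m' : ℕ))), by ring⟩
      exact e1.symm.trans (h3.trans e2)
    exact (ZMod.intCast_eq_intCast_iff _ _ _).mpr h4
  have hm1e := key _ _ _ _ _ _ (hm1.trans hm1'.symm)
  have hm2e := key _ _ _ _ _ _ (hm2.trans hm2'.symm)
  subst hm1e hm2e
  -- the p-divisibility condition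
  have key2 : ∀ (m : Fin k),
      ((a m * ((i₁ + j₁ * (m : ℕ)) * (2 * k + 1)) + ℓ m : ℤ) : ZMod (p * (2 * k + 1))) =
      ((a m * ((i₂ + j₂ * (m : ℕ)) * (2 * k + 1)) + ℓ m : ℤ) : ZMod (p * (2 * k + 1))) →
      (p : ℤ) ∣ ((i₁ : ℤ) - i₂) + ((j₁ : ℤ) - j₂) * (m : ℕ) := by
    intro m h
    have h2 := ((ZMod.intCast_eq_intCast_iff _ _ _).mp h).dvd
    have h3 : ((2 * k + 1 : ℕ) : ℤ) * (p : ℤ) ∣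
        ((2 * k + 1 : ℕ) : ℤ) * (a m * (((i₂ : ℤ) - i₁) + ((j₂ : ℤ) - j₁) * (m : ℕ))) := by
      refine dvd_trans (dvd_of_eq ?_) (h2.trans (dvd_of_eq ?_)) <;> push_cast <;> ring
    have hNpos : (0 : ℤ) < ((2 * k + 1 : ℕ) : ℤ) := by positivity
    have h4 : (p : ℤ) ∣ a m * (((i₂ : ℤ) - i₁) + ((j₂ : ℤ) - j₁) * (m : ℕ)) :=
      (mul_dvd_mul_iff_left hNpos.ne').mp h3
    have h5 := (ha m).symm.dvd_of_dvd_mul_left h4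
    have heq : ((i₁ : ℤ) - i₂) + ((j₁ : ℤ) - j₂) * (m : ℕ) =
        -((((i₂ : ℤ) - i₁) + ((j₂ : ℤ) - j₁) * (m : ℕ))) := by ring
    rw [heq]
    exact dvd_neg.mpr h5
  have small : ∀ u v : ℕ, u < p → v < p → (p : ℤ) ∣ (u : ℤ) - v → u = v := by
    intro u v hu hv hd
    have h0 := Int.eq_zero_of_abs_lt_dvd hd (by rw [abs_sub_lt_iff]; constructor <;> omega)
    omega
  have d1 := key2 m1 (hm1.trans hm1'.symm)
  have d2 := key2 m2 (hm2.trans hm2'.symm)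
  by_cases hmm : m1 = m2
  · rw [← hm1, ← hm2, hmm]
  · exfalso
    have hd : (p : ℤ) ∣ ((j₁ : ℤ) - j₂) * (((m1 : ℕ) : ℤ) - ((m2 : ℕ) : ℤ)) := by
      have hsub := dvd_sub d1 d2
      have heq : (((i₁ : ℤ) - i₂) + ((j₁ : ℤ) - j₂) * (m1 : ℕ)) -
          (((i₁ : ℤ) - i₂) + ((j₁ : ℤ) - j₂) * (m2 : ℕ)) =
          ((j₁ : ℤ) - j₂) * (((m1 : ℕ) : ℤ) - ((m2 : ℕ) : ℤ)) := by ring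
      rwa [heq] at hsub
    rcases (Nat.prime_iff_prime_int.mp hp).dvd_mul.mp hd with hj | hm
    · have hjeq : j₁ = j₂ := small _ _ hj₁ hj₂ hj
      have hieq : i₁ = i₂ := by
        refine small _ _ hi₁ hi₂ ?_
        have : ((i₁ : ℤ) - i₂) = ((i₁ : ℤ) - i₂) + ((j₁ : ℤ) - j₂) * (m1 : ℕ) := by
          rw [hjeq]; ring
        rw [this]; exact d1
      exact hne (by rw [hieq, hjeq])
    · have : (m1 : ℕ) = (m2 : ℕ) :=
        small _ _ (lt_of_lt_of_le m1.isLt hkp) (lt_of_lt_of_le m2.isLt hkp) hm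
      exact hmm (Fin.ext this)
end

section
/- Let n ≥ 3 be odd, k ≥ 3 a divisor of n, and write n = k·d. For g ∈ [0,d−1], i,j ∈ [0,k−1], let B_{i,g,0} = {a_m(i d + g)(2k+1) + ℓ_m : m} and B_{j,g,1} = {a_{m+j}(m d + g)(2k+1) + ℓ_{m+j} : m} in Z_{n(2k+1)} (subscripts of a and ℓ mod k), where the ℓ_m are pairwise incongruent mod 2k+1. Then B_{i,g,0} ∩ B_{j,h,1} is nonempty only if g = h, and in that case the intersection consists of exactly one element, namely a_{i+j}(i d + g)(2k+1) + ℓ_{i+j} (indices mod k). -/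
lemma key (n k d : ℕ) (hn : Odd n) (hd : 0 < d)
    (hnd : n = k * d)
    (a ℓ : Fin k → ℤ)
    (ha : ∀ m, a m = 1 ∨ a m = -2 ∨ a m = 2)
    (hℓ : Function.Injective fun m : Fin k => ((ℓ m : ℤ) : ZMod (2 * k + 1)))
    (i j m m' : Fin k) (g h : ℕ) (hg : g < d) (hh : h < d)
    (heq : ((a m * (((i : ℕ) * d + g) * (2 * k + 1)) + ℓ m : ℤ) : ZMod (n * (2 * k + 1))) =
      ((a (m' + j) * (((m' : ℕ) * d + h) * (2 * k + 1)) + ℓ (m' + j) : ℤ) :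
        ZMod (n * (2 * k + 1)))) :
    m = m' + j ∧ m' = i ∧ g = h := by
  have hdvd : (2 * k + 1) ∣ n * (2 * k + 1) := dvd_mul_left _ _
  -- reduce mod 2k+1
  have hz : ((2 * k + 1 : ℕ) : ZMod (2 * k + 1)) = 0 := ZMod.natCast_self _
  have e : ∀ (c L X : ℤ),
      ((c * (X * (2 * (k : ℤ) + 1)) + L : ℤ) : ZMod (2 * k + 1)) = (L : ZMod (2 * k + 1)) := by
    intro c L X
    push_cast
    push_cast at hz
    rw [hz]
    ring
  have h1 := congrArg (ZMod.castHom hdvd (ZMod (2 * k + 1))) heq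
  rw [map_intCast, map_intCast, e, e] at h1
  have hm : m = m' + j := hℓ h1
  subst hm
  -- now work mod n(2k+1)
  rw [ZMod.intCast_eq_intCast_iff] at heq
  have h2 := heq.dvd
  have h3 : ((n : ℤ) * (2 * k + 1)) ∣
      (2 * (k : ℤ) + 1) * (a (m' + j) * (((m' : ℕ) * d + h : ℤ) - ((i : ℕ) * d + g))) := by
    have := h2
    push_cast at this ⊢
    convert this using 1
    ring
  have hK : (2 * (k : ℤ) + 1) ≠ 0 := by positivity
  rw [show ((n : ℤ) * (2 * k + 1)) = (2 * (k : ℤ) + 1) * n by push_cast; ring,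
    mul_dvd_mul_iff_left hK] at h3
  set X : ℤ := ((m' : ℕ) * d + h : ℤ) - ((i : ℕ) * d + g) with hX
  have h4 : (n : ℤ) ∣ X := by
    have hcop : IsCoprime (n : ℤ) 2 := by
      rw [Int.isCoprime_iff_gcd_eq_one]
      simpa [Int.gcd] using hn.coprime_two_right
    rcases ha (m' + j) with h' | h' | h' <;> rw [h'] at h3
    · simpa using h3
    · exact hcop.dvd_of_dvd_mul_left (by simpa [neg_mul] using h3.neg_right)
    · exact hcop.dvd_of_dvd_mul_left h3
  have hbound : ∀ (p : Fin k) (q : ℕ), q < d → (p : ℕ) * d + q < n := by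
    intro p q hq
    calc (p : ℕ) * d + q < ((p : ℕ) + 1) * d := by rw [add_mul, one_mul]; omega
    _ ≤ k * d := Nat.mul_le_mul_right d p.isLt
    _ = n := hnd.symm
  have hX0 : X = 0 := by
    have b1 := hbound m' h hh
    have b2 := hbound i g hg
    refine Int.eq_zero_of_abs_lt_dvd h4 ?_
    rw [hX, abs_lt]
    constructor <;> push_cast <;> omega
  have hXn : (m' : ℕ) * d + h = (i : ℕ) * d + g := by
    have : (((m' : ℕ) * d + h : ℕ) : ℤ) = (((i : ℕ) * d + g : ℕ) : ℤ) := by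
      push_cast; linarith [hX0, hX]
    exact_mod_cast this
  have hgh : h = g := by
    have := congrArg (· % d) hXn
    simpa [mul_comm _ d, Nat.mul_add_mod, Nat.mod_eq_of_lt hg, Nat.mod_eq_of_lt hh] using this
  refine ⟨rfl, ?_, hgh.symm⟩
  have : (m' : ℕ) * d = (i : ℕ) * d := by omega
  exact Fin.ext (Nat.eq_of_mul_eq_mul_right hd this)


/-- Block-diagonal structure of the globally simple `H_n(n;k)`: the blocks `B_{i,g,0}`
and `B_{j,h,1}` intersect only if `g = h`, in which case they meet in exactly the
element `a_{i+j} (i d + g)(2k+1) + ℓ_{i+j}`. -/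
theorem stmt_18 (n k d : ℕ) (hn : Odd n) (hn3 : 3 ≤ n) (hk : 3 ≤ k)
    (hnd : n = k * d)
    (a ℓ : Fin k → ℤ)
    (ha : ∀ m, a m = 1 ∨ a m = -2 ∨ a m = 2)
    (hℓ : Function.Injective fun m : Fin k => ((ℓ m : ℤ) : ZMod (2 * k + 1)))
    (B₀ B₁ : Fin k → ℕ → Finset (ZMod (n * (2 * k + 1))))
    (hB₀ : ∀ i g, B₀ i g = Finset.image
      (fun m : Fin k =>
        ((a m * (((i : ℕ) * d + g) * (2 * k + 1)) + ℓ m : ℤ) : ZMod (n * (2 * k + 1))))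
      Finset.univ)
    (hB₁ : ∀ j h, B₁ j h = Finset.image
      (fun m : Fin k =>
        ((a (m + j) * (((m : ℕ) * d + h) * (2 * k + 1)) + ℓ (m + j) : ℤ) : ZMod (n * (2 * k + 1))))
      Finset.univ) :
    ∀ i j : Fin k, ∀ g h : ℕ, g < d → h < d →
      ((B₀ i g ∩ B₁ j h).Nonempty → g = h) ∧
      (g = h → B₀ i g ∩ B₁ j h =
        {((a (i + j) * (((i : ℕ) * d + g) * (2 * k + 1)) + ℓ (i + j) : ℤ) :
          ZMod (n * (2 * k + 1)))}) := by
  have hd : 0 < d := by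
    rcases Nat.eq_zero_or_pos d with rfl | h
    · simp at hnd; omega
    · exact h
  intro i j g h hg hh
  constructor
  · rintro ⟨x, hx⟩
    rw [Finset.mem_inter, hB₀, hB₁, Finset.mem_image, Finset.mem_image] at hx
    obtain ⟨⟨m, -, hm⟩, ⟨m', -, hm'⟩⟩ := hx
    exact (key n k d hn hd hnd a ℓ ha hℓ i j m m' g h hg hh (hm.trans hm'.symm)).2.2
  · rintro rfl
    ext x
    rw [Finset.mem_inter, hB₀, hB₁, Finset.mem_image, Finset.mem_image,
      Finset.mem_singleton]
    constructor
    · rintro ⟨⟨m, -, hm⟩, ⟨m', -, hm'⟩⟩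
      obtain ⟨rfl, rfl, -⟩ :=
        key n k d hn hd hnd a ℓ ha hℓ i j m m' g g hg hg (hm.trans hm'.symm)
      rw [← hm']
    · rintro rfl
      exact ⟨⟨i + j, Finset.mem_univ _, rfl⟩, ⟨i, Finset.mem_univ _, rfl⟩⟩
end

section
/- Let p ≥ 3 be prime, 3 ≤ k ≤ p, and define B_{i−1,0} = {a_m(i−1)(2k+1)+ℓ_m : m ∈ [0,k−1]} and B_{j−1,p−1} = {a_m(j−1+m(p−1))(2k+1)+ℓ_m : m ∈ [0,k−1]} in Z_{p(2k+1)}, where the ℓ_m are pairwise incongruent mod 2k+1. Then B_{i−1,0} ∩ B_{j−1,p−1} ≠ ∅ if and only if (j − i) mod p ∈ [0, k−1]; i.e., the associated p × p array with cell (i,j) filled iff the intersection is nonempty is cyclically k-diagonal. -/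
/-- Cyclic `k`-diagonal structure: `B_{i,0}` and `B_{j,p-1}` intersect iff
`(j - i) mod p ∈ [0, k-1]`. -/
theorem stmt_19 (p k : ℕ) (hp : p.Prime) (hp3 : 3 ≤ p) (hk3 : 3 ≤ k) (hkp : k ≤ p)
    (a ℓ : Fin k → ℤ)
    (ha : ∀ m, a m = 1 ∨ a m = -1 ∨ a m = 2 ∨ a m = -2)
    (hℓ : Function.Injective fun m : Fin k => ((ℓ m : ℤ) : ZMod (2 * k + 1)))
    (B₀ B₁ : ℕ → Finset (ZMod (p * (2 * k + 1))))
    (hB₀ : ∀ i, B₀ i = Finset.image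
      (fun m : Fin k =>
        ((a m * ((i : ℤ) * (2 * k + 1)) + ℓ m : ℤ) : ZMod (p * (2 * k + 1))))
      Finset.univ)
    (hB₁ : ∀ j, B₁ j = Finset.image
      (fun m : Fin k =>
        ((a m * (((j : ℤ) + (m : ℕ) * ((p : ℤ) - 1)) * (2 * k + 1)) + ℓ m : ℤ) :
          ZMod (p * (2 * k + 1))))
      Finset.univ) :
    ∀ i j : ℕ, i < p → j < p →
      ((B₀ i ∩ B₁ j).Nonempty ↔ (j + p - i) % p < k) := by
  intro i j hi hj
  constructor
  · rintro ⟨x, hx⟩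
    rw [Finset.mem_inter, hB₀, hB₁] at hx
    obtain ⟨m, -, hm⟩ := Finset.mem_image.mp hx.1
    obtain ⟨m', -, hm'⟩ := Finset.mem_image.mp hx.2
    have heq := hm.trans hm'.symm
    rw [ZMod.intCast_eq_intCast_iff] at heq
    have hdvd : ((2 * k + 1 : ℕ) : ℤ) ∣ ((p * (2 * k + 1) : ℕ) : ℤ) :=
      ⟨(p : ℤ), by push_cast; ring⟩
    have hmod1 := Int.ModEq.of_dvd hdvd heq
    have h1 : a m * ((i : ℤ) * (2 * k + 1)) + ℓ m ≡ 0 + ℓ m [ZMOD ((2 * k + 1 : ℕ) : ℤ)] :=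
      Int.ModEq.add_right _ (Int.modEq_zero_iff_dvd.mpr ⟨a m * i, by push_cast; ring⟩)
    have h2 : a m' * (((j : ℤ) + (m' : ℕ) * ((p : ℤ) - 1)) * (2 * k + 1)) + ℓ m'
        ≡ 0 + ℓ m' [ZMOD ((2 * k + 1 : ℕ) : ℤ)] :=
      Int.ModEq.add_right _
        (Int.modEq_zero_iff_dvd.mpr ⟨a m' * ((j : ℤ) + (m' : ℕ) * ((p : ℤ) - 1)), by push_cast; ring⟩)
    have hl : ℓ m ≡ ℓ m' [ZMOD ((2 * k + 1 : ℕ) : ℤ)] := by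
      have := (h1.symm.trans hmod1).trans h2
      simpa using this
    have hmm : m = m' := hℓ (by exact (ZMod.intCast_eq_intCast_iff _ _ _).mpr hl)
    subst hmm
    have hd : ((p * (2 * k + 1) : ℕ) : ℤ) ∣
        (a m * (((j : ℤ) + (m : ℕ) * ((p : ℤ) - 1)) * (2 * k + 1)) + ℓ m)
        - (a m * ((i : ℤ) * (2 * k + 1)) + ℓ m) := heq.dvd
    obtain ⟨c, hc⟩ := hd
    have h2k : (2 * (k : ℤ) + 1) ≠ 0 := by positivity
    have hpd : (p : ℤ) ∣ a m * ((j : ℤ) + (m : ℕ) * ((p : ℤ) - 1) - i) := by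
      refine ⟨c, ?_⟩
      have hcc : (2 * (k : ℤ) + 1) * (a m * ((j : ℤ) + (m : ℕ) * ((p : ℤ) - 1) - i))
          = (2 * (k : ℤ) + 1) * ((p : ℤ) * c) := by
        push_cast at hc; linear_combination hc
      exact mul_left_cancel₀ h2k hcc
    have hpa : ¬ (p : ℤ) ∣ a m := by
      intro hdvd'
      have h2' : (p : ℤ) ∣ 2 := by
        rcases ha m with h | h | h | h <;> rw [h] at hdvd'
        · exact hdvd'.trans ⟨2, by ring⟩
        · exact (dvd_neg.mp hdvd').trans ⟨2, by ring⟩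
        · exact hdvd'
        · exact dvd_neg.mp hdvd'
      have hle := Int.le_of_dvd (by norm_num) h2'
      have : (3 : ℤ) ≤ (p : ℤ) := by exact_mod_cast hp3
      omega
    have hpD : (p : ℤ) ∣ ((j : ℤ) + (m : ℕ) * ((p : ℤ) - 1) - i) :=
      ((Nat.prime_iff_prime_int.mp hp).dvd_mul.mp hpd).resolve_left hpa
    obtain ⟨c', hc'⟩ := hpD
    have hkey : ((j + p - i : ℕ) : ℤ) - ((m : ℕ) : ℤ) = (p : ℤ) * (c' - (m : ℕ) + 1) := by
      have hcast : ((j + p - i : ℕ) : ℤ) = (j : ℤ) + p - i := by omega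
      rw [hcast]; linear_combination hc'
    have hmodeq : (j + p - i) % p = (m : ℕ) % p := by
      have h1' : ((m : ℕ) : ℤ) ≡ ((j + p - i : ℕ) : ℤ) [ZMOD (p : ℤ)] :=
        Int.modEq_iff_dvd.mpr ⟨(c' - (m : ℕ) + 1), hkey⟩
      have h2' : ((j + p - i : ℕ) : ℤ) % (p : ℤ) = ((m : ℕ) : ℤ) % (p : ℤ) := h1'.symm
      have h3' : (((j + p - i) % p : ℕ) : ℤ) = (((m : ℕ) % p : ℕ) : ℤ) := by
        rw [Int.natCast_mod, Int.natCast_mod]; exact h2'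
      exact_mod_cast h3'
    have hmk : (m : ℕ) < k := m.2
    have hmp : (m : ℕ) % p = (m : ℕ) := Nat.mod_eq_of_lt (lt_of_lt_of_le hmk hkp)
    omega
  · intro h
    set m0 := (j + p - i) % p with hm0
    obtain ⟨c, hc⟩ : ∃ c : ℕ, j + p - i = p * c + m0 := ⟨(j + p - i) / p, (Nat.div_add_mod _ _).symm⟩
    have hci : (j : ℤ) + p - i = (p : ℤ) * c + m0 := by omega
    refine ⟨((a ⟨m0, h⟩ * ((i : ℤ) * (2 * k + 1)) + ℓ ⟨m0, h⟩ : ℤ) : ZMod (p * (2 * k + 1))),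
      Finset.mem_inter.mpr ⟨?_, ?_⟩⟩
    · rw [hB₀]
      exact Finset.mem_image.mpr ⟨⟨m0, h⟩, Finset.mem_univ _, rfl⟩
    · rw [hB₁]
      refine Finset.mem_image.mpr ⟨⟨m0, h⟩, Finset.mem_univ _, ?_⟩
      rw [ZMod.intCast_eq_intCast_iff]
      refine Int.modEq_iff_dvd.mpr ⟨-(a ⟨m0, h⟩ * ((c : ℤ) - 1 + m0)), ?_⟩
      push_cast [Fin.val_mk]
      linear_combination (-(a ⟨m0, h⟩) * (2 * (k : ℤ) + 1)) * hci
end
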